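/- arXiv:0908.2711 — 4 statements merged into one kernel-verified Lean document; each statement's English description precedes it below -/
import Mathlib

section
/- Let E be a linear subspace of ℝⁿ and p_E the orthogonal projection onto E. Let μ be a Borel probability measure on ℝⁿ and ν a Borel probability measure on ℝⁿ supported in E. Let ρ = (Id × p_E)_# μ, and let σ be an optimal transference plan (for the quadratic cost |x−y|²) between (p_E)_# μ and ν. Assume that Spt((p_E)_# μ) is compact. Then for every Borel probability measure Γ on ℝⁿ × ℝⁿ × ℝⁿ whose marginal on the first two factors is ρ and whose marginal on the last two factors is σ (a gluing of ρ and σ), the marginal π¹³_# Γ of Γ on the first and third factors is an optimal transference plan between μ and ν. -/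
open MeasureTheory
open scoped ENNReal

/-- A transference plan (coupling) between `μ` and `ν`. -/
def IsCoupling {X Y : Type*} [MeasurableSpace X] [MeasurableSpace Y]
    (ρ : Measure (X × Y)) (μ : Measure X) (ν : Measure Y) : Prop :=
  ρ.map Prod.fst = μ ∧ ρ.map Prod.snd = ν

/-- The quadratic cost of a transference plan. -/
noncomputable def quadCost {X : Type*} [PseudoMetricSpace X] [MeasurableSpace X]
    (ρ : Measure (X × X)) : ℝ≥0∞ :=
  ∫⁻ p, ENNReal.ofReal (dist p.1 p.2 ^ 2) ∂ρ

/-- An optimal transference plan for the quadratic cost. -/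
def IsOptimalCoupling {X : Type*} [PseudoMetricSpace X] [MeasurableSpace X]
    (ρ : Measure (X × X)) (μ ν : Measure X) : Prop :=
  IsCoupling ρ μ ν ∧ ∀ σ : Measure (X × X), IsCoupling σ μ ν → quadCost ρ ≤ quadCost σ

/-- The (closed) support of a measure. -/
def spt {X : Type*} [TopologicalSpace X] [MeasurableSpace X] (μ : Measure X) : Set X :=
  {x | ∀ U ∈ nhds x, μ U ≠ 0}

/-- The orthogonal projection onto a linear subspace `E ⊆ ℝⁿ`, as a map `ℝⁿ → ℝⁿ`. -/
noncomputable def projE {n : ℕ} (E : Submodule ℝ (EuclideanSpace ℝ (Fin n))) :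
    EuclideanSpace ℝ (Fin n) → EuclideanSpace ℝ (Fin n) :=
  fun x => (E.orthogonalProjection x : EuclideanSpace ℝ (Fin n))

/-!
Write `P` for the orthogonal projection onto `E`. Since `ν` lives on `E`, Pythagoras gives
`|x - y|² = |x - P x|² + |P x - y|²` for `ν`-a.e. `y`, so the cost of every coupling `γ` of `μ` and
`ν` is `∫ |x - P x|² dμ` plus the cost of its projection `(P × Id)_# γ`, a coupling of `P_# μ` and
`ν`. A coupling whose projection is optimal is therefore optimal. For `π¹³_# Γ` the projection is
`π²³_# Γ = σ`, because `Γ` is concentrated on `{t | t₂ = P t₁}`.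
-/

open MeasureTheory

lemma IsCoupling.map_prodMap {X Y X' Y' : Type*} [MeasurableSpace X] [MeasurableSpace Y]
    [MeasurableSpace X'] [MeasurableSpace Y'] {γ : Measure (X × Y)} {μ : Measure X}
    {ν : Measure Y} (hγ : IsCoupling γ μ ν) {f : X → X'} {g : Y → Y'} (hf : Measurable f)
    (hg : Measurable g) : IsCoupling (γ.map (Prod.map f g)) (μ.map f) (ν.map g) := by
  constructor
  · rw [Measure.map_map measurable_fst (hf.prodMap hg), ← hγ.1,
      Measure.map_map hf measurable_fst]
    rfl
  · rw [Measure.map_map measurable_snd (hf.prodMap hg), ← hγ.2,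
      Measure.map_map hg measurable_snd]
    rfl

namespace Submodule

variable {V : Type*} [NormedAddCommGroup V] [InnerProductSpace ℝ V]
  (K : Submodule ℝ V) [K.HasOrthogonalProjection]

lemma dist_sq_eq_dist_starProjection_sq_add {y : V} (hy : y ∈ K) (x : V) :
    dist x y ^ 2 = dist x (K.starProjection x) ^ 2 + dist (K.starProjection x) y ^ 2 := by
  have horth : inner ℝ (x - K.starProjection x) (K.starProjection x - y) = 0 :=
    inner_left_of_mem_orthogonal (K.sub_mem (K.starProjection_apply_mem x) hy)
      (K.sub_starProjection_mem_orthogonal x)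
  rw [dist_eq_norm, dist_eq_norm, dist_eq_norm,
    ← sub_add_sub_cancel x (K.starProjection x) y, sq, sq, sq,
    norm_add_sq_eq_norm_sq_add_norm_sq_real horth]

variable [MeasurableSpace V] [BorelSpace V] [SecondCountableTopology V]

lemma quadCost_eq_add_quadCost_map_starProjection {γ : Measure (V × V)} {μ ν : Measure V}
    (hγ : IsCoupling γ μ ν) (hν : ν (K : Set V)ᶜ = 0) :
    quadCost γ = ∫⁻ x, ENNReal.ofReal (dist x (K.starProjection x) ^ 2) ∂μ
      + quadCost (γ.map (Prod.map K.starProjection id)) := by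
  have hP : Measurable K.starProjection := K.starProjection.measurable
  have hsnd : ∀ᵐ q ∂γ, q.2 ∈ K :=
    ae_of_ae_map measurable_snd.aemeasurable (by rwa [hγ.2])
  have hcost : Measurable fun q : V × V => ENNReal.ofReal (dist q.1 q.2 ^ 2) := by fun_prop
  calc quadCost γ
      = ∫⁻ q, ENNReal.ofReal (dist q.1 (K.starProjection q.1) ^ 2)
          + ENNReal.ofReal (dist (K.starProjection q.1) q.2 ^ 2) ∂γ := by
        refine lintegral_congr_ae ?_
        filter_upwards [hsnd] with q hq
        rw [K.dist_sq_eq_dist_starProjection_sq_add hq,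
          ENNReal.ofReal_add (sq_nonneg _) (sq_nonneg _)]
    _ = _ := by
        rw [lintegral_add_left (by fun_prop), ← hγ.1, lintegral_map (by fun_prop) measurable_fst,
          quadCost, lintegral_map hcost (hP.prodMap measurable_id)]
        rfl

theorem isOptimalCoupling_of_map_starProjection {γ : Measure (V × V)} {μ ν : Measure V}
    (hγ : IsCoupling γ μ ν) (hν : ν (K : Set V)ᶜ = 0)
    (hopt : IsOptimalCoupling (γ.map (Prod.map K.starProjection id)) (μ.map K.starProjection) ν) :
    IsOptimalCoupling γ μ ν := by
  refine ⟨hγ, fun γ' hγ' => ?_⟩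
  have hproj := hγ'.map_prodMap K.starProjection.measurable measurable_id
  rw [Measure.map_id] at hproj
  rw [K.quadCost_eq_add_quadCost_map_starProjection hγ hν,
    K.quadCost_eq_add_quadCost_map_starProjection hγ' hν]
  gcongr
  exact hopt.2 _ hproj

end Submodule

lemma map_prodMap_map_fst_thd_of_map_graph {X Y Z : Type*} [TopologicalSpace X]
    [MeasurableSpace X] [OpensMeasurableSpace X] [TopologicalSpace Y] [MeasurableSpace Y]
    [BorelSpace Y] [T2Space Y] [OpensMeasurableSpace (X × Y)] [MeasurableSpace Z]
    {Γ : Measure (X × Y × Z)} {μ : Measure X} {f : X → Y} (hf : Continuous f)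
    (hΓ : Γ.map (fun t => (t.1, t.2.1)) = μ.map (fun x => (x, f x))) :
    (Γ.map (fun t => (t.1, t.2.2))).map (Prod.map f id) = Γ.map Prod.snd := by
  have hgraph : ∀ᵐ q ∂Γ.map (fun t => (t.1, t.2.1)), q.2 = f q.1 := by
    rw [hΓ]
    exact (ae_map_iff (by fun_prop)
      (isClosed_eq continuous_snd (hf.comp continuous_fst)).measurableSet).2
      (ae_of_all _ fun _ => rfl)
  rw [Measure.map_map (by fun_prop) (by fun_prop)]
  refine Measure.map_congr ?_
  filter_upwards [ae_of_ae_map (by fun_prop) hgraph] with ⟨x, y, z⟩ (hy : y = f x)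
  rw [hy]
  rfl

lemma isCoupling_map_fst_thd {X Y Z : Type*} [MeasurableSpace X] [MeasurableSpace Y]
    [MeasurableSpace Z] (Γ : Measure (X × Y × Z)) :
    IsCoupling (Γ.map (fun t => (t.1, t.2.2))) (Γ.map Prod.fst) (Γ.map (fun t => t.2.2)) :=
  ⟨Measure.map_map measurable_fst (by fun_prop), Measure.map_map measurable_snd (by fun_prop)⟩

theorem optimal_of_gluing_projection_general (n : ℕ) (E : Submodule ℝ (EuclideanSpace ℝ (Fin n)))
    (μ ν : Measure (EuclideanSpace ℝ (Fin n)))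
    (hν : ν (↑E : Set (EuclideanSpace ℝ (Fin n)))ᶜ = 0)
    (σ : Measure (EuclideanSpace ℝ (Fin n) × EuclideanSpace ℝ (Fin n)))
    (hσ : IsOptimalCoupling σ (μ.map (projE E)) ν)
    (Γ : Measure (EuclideanSpace ℝ (Fin n) ×
      EuclideanSpace ℝ (Fin n) × EuclideanSpace ℝ (Fin n)))
    (hΓ12 : Γ.map (fun t => (t.1, t.2.1)) = μ.map (fun x => (x, projE E x)))
    (hΓ23 : Γ.map Prod.snd = σ) :
    IsOptimalCoupling (Γ.map (fun t => (t.1, t.2.2))) μ ν := by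
  have hP : projE E = E.starProjection := rfl
  have hΓ1 : Γ.map Prod.fst = μ := by
    have hgraph : Measurable fun x => (x, projE E x) := by rw [hP]; fun_prop
    calc Γ.map Prod.fst = (Γ.map fun t => (t.1, t.2.1)).map Prod.fst := by
          rw [Measure.map_map measurable_fst (by fun_prop)]; rfl
      _ = μ := by rw [hΓ12, Measure.map_map measurable_fst hgraph]; exact Measure.map_id
  have hΓ3 : Γ.map (fun t => t.2.2) = ν := by
    rw [← hσ.1.2, ← hΓ23, Measure.map_map measurable_snd measurable_snd]
    rfl
  have hcoup : IsCoupling (Γ.map (fun t => (t.1, t.2.2))) μ ν :=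
    hΓ1 ▸ hΓ3 ▸ isCoupling_map_fst_thd Γ
  have hproj := map_prodMap_map_fst_thd_of_map_graph E.starProjection.continuous hΓ12
  rw [hΓ23] at hproj
  rw [hP] at hσ
  exact E.isOptimalCoupling_of_map_starProjection hcoup hν (hproj ▸ hσ)

/-- Gluing an optimal plan with a projection plan: if `ρ = (Id × p_E)_# μ` and `σ` is an
optimal plan between `(p_E)_# μ` and a measure `ν` supported in `E`, with `Spt((p_E)_# μ)`
compact, then for any gluing `Γ` of `ρ` and `σ`, the marginal `π¹³_# Γ` is an optimal
transference plan between `μ` and `ν`. -/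
theorem optimal_of_gluing_projection (n : ℕ) (E : Submodule ℝ (EuclideanSpace ℝ (Fin n)))
    (μ ν : Measure (EuclideanSpace ℝ (Fin n)))
    [IsProbabilityMeasure μ] [IsProbabilityMeasure ν]
    (hν : ν (↑E : Set (EuclideanSpace ℝ (Fin n)))ᶜ = 0)
    (σ : Measure (EuclideanSpace ℝ (Fin n) × EuclideanSpace ℝ (Fin n)))
    (hσ : IsOptimalCoupling σ (μ.map (projE E)) ν)
    (hcpt : IsCompact (spt (μ.map (projE E))))
    (Γ : Measure (EuclideanSpace ℝ (Fin n) ×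
      EuclideanSpace ℝ (Fin n) × EuclideanSpace ℝ (Fin n)))
    [IsProbabilityMeasure Γ]
    (hΓ12 : Γ.map (fun t => (t.1, t.2.1)) = μ.map (fun x => (x, projE E x)))
    (hΓ23 : Γ.map Prod.snd = σ) :
    IsOptimalCoupling (Γ.map (fun t => (t.1, t.2.2))) μ ν :=
  optimal_of_gluing_projection_general n E μ ν hν σ hσ Γ hΓ12 hΓ23
end

section
/- Let X₁, X₂, X₃ be Polish spaces, μ₁ a Borel probability measure on X₁, and F¹ : X₁ → X₂, F² : X₂ → X₃ continuous maps. Set μ₂ = F¹_# μ₁, ρ₁₂ = (Id × F¹)_# μ₁ and ρ₂₃ = (Id × F²)_# μ₂. Then every Borel probability measure Γ on X₁ × X₂ × X₃ whose marginal on X₁ × X₂ is ρ₁₂ and whose marginal on X₂ × X₃ is ρ₂₃ satisfies Γ = (Id × F¹ × (F² ∘ F¹))_# μ₁, and consequently π¹³_# Γ = (Id × (F² ∘ F¹))_# μ₁, the transference plan associated to the composed map F² ∘ F¹. -/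
open MeasureTheory

/-!
A gluing `Γ` of two plans induced by maps is concentrated on graphs: its `(1,2)`-marginal says
`t.2.1 = F₁ t.1` for `Γ`-a.e. `t`, and its `(2,3)`-marginal says `t.2.2 = F₂ t.2.1` (the graphs
are measurable because the diagonals of the standard Borel spaces `X₂`, `X₃` are). So `Γ`-a.e.
`t = (t.1, F₁ t.1, F₂ (F₁ t.1))`, which makes `Γ` the pushforward of its first marginal, and that
marginal is `μ₁`.
-/

namespace MeasureTheory.Measure

variable {α β γ : Type*} [MeasurableSpace α] [MeasurableSpace β] [MeasurableSpace γ]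

lemma ae_snd_eq_of_map_eq_map_graph [MeasurableEq γ] {μ : Measure α} {ν : Measure β}
    {f : α → γ} {g : β → α × γ} (hf : Measurable f) (hg : Measurable g)
    (h : ν.map g = μ.map fun x => (x, f x)) :
    ∀ᵐ b ∂ν, (g b).2 = f (g b).1 := by
  refine ae_of_ae_map (p := fun q : α × γ => q.2 = f q.1) hg.aemeasurable ?_
  rw [h, ae_map_iff (by fun_prop) (measurableSet_eq_fun measurable_snd (by fun_prop))]
  exact ae_of_all _ fun _ => rfl

lemma map_map_eq_self_of_ae_eq {ν : Measure β} {p : β → α} {h : α → β}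
    (hp : Measurable p) (hh : Measurable h) (hae : ∀ᵐ b ∂ν, h (p b) = b) :
    (ν.map p).map h = ν := by
  rw [map_map hh hp, Function.comp_def, map_congr (g := id) hae, map_id]

end MeasureTheory.Measure

open Measure in
theorem gluing_of_maps_eq_general {X₁ X₂ X₃ : Type*}
    [TopologicalSpace X₁] [MeasurableSpace X₁] [BorelSpace X₁]
    [TopologicalSpace X₂] [PolishSpace X₂] [MeasurableSpace X₂] [BorelSpace X₂]
    [TopologicalSpace X₃] [PolishSpace X₃] [MeasurableSpace X₃] [BorelSpace X₃]
    (μ₁ : Measure X₁)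
    (F₁ : X₁ → X₂) (F₂ : X₂ → X₃) (hF₁ : Continuous F₁) (hF₂ : Continuous F₂)
    (Γ : Measure (X₁ × X₂ × X₃))
    (hΓ12 : Γ.map (fun t => (t.1, t.2.1)) = μ₁.map (fun x => (x, F₁ x)))
    (hΓ23 : Γ.map Prod.snd = (μ₁.map F₁).map (fun y => (y, F₂ y))) :
    Γ = μ₁.map (fun x => (x, F₁ x, F₂ (F₁ x))) ∧
    Γ.map (fun t => (t.1, t.2.2)) = μ₁.map (fun x => (x, F₂ (F₁ x))) := by
  have mF₁ := hF₁.measurable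
  have mF₂ := hF₂.measurable
  have hfst : Γ.map Prod.fst = μ₁ := by
    rw [← fst_map_prodMk (X := Prod.fst) (by fun_prop : Measurable fun t : X₁ × X₂ × X₃ => t.2.1),
      hΓ12, fst_map_prodMk mF₁]
    exact map_id
  have h₁₂ := ae_snd_eq_of_map_eq_map_graph mF₁ (by fun_prop) hΓ12
  have h₂₃ := ae_snd_eq_of_map_eq_map_graph mF₂ measurable_snd hΓ23
  have hΓ : Γ = μ₁.map (fun x => (x, F₁ x, F₂ (F₁ x))) := by
    rw [← hfst, map_map_eq_self_of_ae_eq measurable_fst (by fun_prop)]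
    filter_upwards [h₁₂, h₂₃] with ⟨x, y, z⟩ hy hz
    simp only at hy hz
    subst hy hz
    rfl
  refine ⟨hΓ, ?_⟩
  rw [hΓ, map_map (by fun_prop) (by fun_prop)]
  rfl

/-- Gluing of transference plans induced by maps extends composition of maps: if
`ρ₁₂ = (Id × F¹)_# μ₁` and `ρ₂₃ = (Id × F²)_# μ₂` with `μ₂ = F¹_# μ₁`, then any gluing `Γ`
of `ρ₁₂` and `ρ₂₃` equals `(Id × F¹ × (F² ∘ F¹))_# μ₁`, and its marginal on the first and
third factors is the plan associated to the composed map `F² ∘ F¹`. -/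
theorem gluing_of_maps_eq {X₁ X₂ X₃ : Type*}
    [TopologicalSpace X₁] [PolishSpace X₁] [MeasurableSpace X₁] [BorelSpace X₁]
    [TopologicalSpace X₂] [PolishSpace X₂] [MeasurableSpace X₂] [BorelSpace X₂]
    [TopologicalSpace X₃] [PolishSpace X₃] [MeasurableSpace X₃] [BorelSpace X₃]
    (μ₁ : Measure X₁) [IsProbabilityMeasure μ₁]
    (F₁ : X₁ → X₂) (F₂ : X₂ → X₃) (hF₁ : Continuous F₁) (hF₂ : Continuous F₂)
    (Γ : Measure (X₁ × X₂ × X₃)) [IsProbabilityMeasure Γ]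
    (hΓ12 : Γ.map (fun t => (t.1, t.2.1)) = μ₁.map (fun x => (x, F₁ x)))
    (hΓ23 : Γ.map Prod.snd = (μ₁.map F₁).map (fun y => (y, F₂ y))) :
    Γ = μ₁.map (fun x => (x, F₁ x, F₂ (F₁ x))) ∧
    Γ.map (fun t => (t.1, t.2.2)) = μ₁.map (fun x => (x, F₂ (F₁ x))) :=
  gluing_of_maps_eq_general μ₁ F₁ F₂ hF₁ hF₂ Γ hΓ12 hΓ23
end

section
/- Let U ⊆ ℝⁿ be open, φ : U → ℝ^{n+k} a C¹ immersion, E ⊆ ℝ^{n+k} a linear subspace with dim E = m ≤ n, and P : ℝ^{n+k} → E the orthogonal projection. Let f : U → [0,∞) be a Borel measurable function, locally integrable with respect to the Riemannian volume measure dv_M = √(det(Dφ(x)ᵀ Dφ(x))) dx, which vanishes at every point x ∈ U where the linear map P ∘ Dφ(x) : ℝⁿ → E is not surjective. Then the pushforward measure (P ∘ φ)_# (f · dv_M) is absolutely continuous with respect to the Lebesgue measure of E. -/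
open MeasureTheory Matrix
open scoped ENNReal

/-- The matrix of the differential `Dφ(x)` in the canonical bases. -/
noncomputable def Dmat {n m : ℕ} (φ : EuclideanSpace ℝ (Fin n) → EuclideanSpace ℝ (Fin m))
    (x : EuclideanSpace ℝ (Fin n)) : Matrix (Fin m) (Fin n) ℝ :=
  Matrix.of fun i j => fderiv ℝ φ x (EuclideanSpace.single j 1) i

/-- The induced Riemannian metric `g(x) = Dφ(x)ᵀ Dφ(x)`. -/
noncomputable def gMat {n m : ℕ} (φ : EuclideanSpace ℝ (Fin n) → EuclideanSpace ℝ (Fin m))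
    (x : EuclideanSpace ℝ (Fin n)) : Matrix (Fin n) (Fin n) ℝ :=
  (Dmat φ x)ᵀ * Dmat φ x

/-- The Riemannian volume measure `dv_M = √(det g(x)) dx` on `U`. -/
noncomputable def volM {n m : ℕ} (φ : EuclideanSpace ℝ (Fin n) → EuclideanSpace ℝ (Fin m))
    (U : Set (EuclideanSpace ℝ (Fin n))) : Measure (EuclideanSpace ℝ (Fin n)) :=
  (volume.restrict U).withDensity fun x => ENNReal.ofReal (Real.sqrt (gMat φ x).det)

/-- The mean curvature vector
`H(x) = (1/n) ∑ g^{ij}(x) Π_x^⊥(∂_i ∂_j φ(x))`, where `Π_x^⊥` is the orthogonal projection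
onto the orthogonal complement of the range of `Dφ(x)`. -/
noncomputable def meanCurv {n k : ℕ} (φ : EuclideanSpace ℝ (Fin n) → EuclideanSpace ℝ (Fin (n + k)))
    (x : EuclideanSpace ℝ (Fin n)) : EuclideanSpace ℝ (Fin (n + k)) :=
  (n : ℝ)⁻¹ • ∑ i : Fin n, ∑ j : Fin n, ((gMat φ x)⁻¹ i j) •
    (Submodule.orthogonalProjectionOnto (LinearMap.range (fderiv ℝ φ x : EuclideanSpace ℝ (Fin n) →ₗ[ℝ] EuclideanSpace ℝ (Fin (n + k))))ᗮ
      (fderiv ℝ (fun y => fderiv ℝ φ y (EuclideanSpace.single i 1)) x (EuclideanSpace.single j 1)) :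
      EuclideanSpace ℝ (Fin (n + k)))

/-- The Gram matrix `(P∘Dφ(x))ᵀ (P∘Dφ(x))` of the projected differential, `P` being the
orthogonal projection onto `E`. -/
noncomputable def projGram {n k : ℕ} (φ : EuclideanSpace ℝ (Fin n) → EuclideanSpace ℝ (Fin (n + k)))
    (E : Submodule ℝ (EuclideanSpace ℝ (Fin (n + k)))) (x : EuclideanSpace ℝ (Fin n)) :
    Matrix (Fin n) (Fin n) ℝ :=
  Matrix.of fun i j =>
    inner ℝ (Submodule.orthogonalProjectionOnto E (fderiv ℝ φ x (EuclideanSpace.single i 1)) : ↥E)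
      (Submodule.orthogonalProjectionOnto E (fderiv ℝ φ x (EuclideanSpace.single j 1)))

/-- The Jacobian `J_E(x) = √(det((P∘Dφ(x))ᵀ(P∘Dφ(x)))) / √(det g(x))` of the orthogonal
projection of the immersed submanifold onto `E`. -/
noncomputable def JacE {n k : ℕ} (φ : EuclideanSpace ℝ (Fin n) → EuclideanSpace ℝ (Fin (n + k)))
    (E : Submodule ℝ (EuclideanSpace ℝ (Fin (n + k)))) (x : EuclideanSpace ℝ (Fin n)) : ℝ :=
  Real.sqrt (projGram φ E x).det / Real.sqrt (gMat φ x).det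

/-- The Riemannian norm of the gradient, `|∇u|_g = √(∑ g^{ij} ∂_i u ∂_j u)`. -/
noncomputable def gradNorm {n m : ℕ} (φ : EuclideanSpace ℝ (Fin n) → EuclideanSpace ℝ (Fin m))
    (u : EuclideanSpace ℝ (Fin n) → ℝ) (x : EuclideanSpace ℝ (Fin n)) : ℝ :=
  Real.sqrt (∑ i : Fin n, ∑ j : Fin n, ((gMat φ x)⁻¹ i j) *
    (fderiv ℝ u x (EuclideanSpace.single i 1)) * (fderiv ℝ u x (EuclideanSpace.single j 1)))


/-!
The measure `f · dv_M` is carried by `U ∩ {f ≠ 0}`, where `p = P ∘ φ` is a `C¹` submersion, and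
preimages of null sets under a submersion are null. Near `x₀`, with `L = Dp(x₀)` and `j` a right
inverse of `L`, the map `Φ x = x + j (p x - L x)` satisfies `L ∘ Φ = p` and `DΦ(x₀) = id`, so
`p⁻¹' s` is locally the image of `L⁻¹' s` under the `C¹` local inverse of `Φ`. The set `L⁻¹' s` is
null because the pushforward of Haar measure by a linear surjection is a multiple of Haar measure,
and `C¹` maps send null sets to null sets.
-/

open Function Set Filter Topology

section Submersion

variable {V F : Type*} [NormedAddCommGroup V] [NormedSpace ℝ V] [FiniteDimensional ℝ V]
  [MeasurableSpace V] [BorelSpace V] [NormedAddCommGroup F] [NormedSpace ℝ F]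
  [MeasurableSpace F] [BorelSpace F]
  (μ : Measure V) [μ.IsAddHaarMeasure] (ν : Measure F) [ν.IsAddHaarMeasure]

theorem LinearMap.addHaar_preimage_eq_zero_of_surjective {L : V →ₗ[ℝ] F} (hL : Surjective L)
    {s : Set F} (hs : ν s = 0) : μ (L ⁻¹' s) = 0 := by
  set t := toMeasurable ν s
  have hLt : ∀ᵐ x ∂μ, L x ∈ tᶜ :=
    (ae_comp_linearMap_mem_iff L μ ν hL (measurableSet_toMeasurable ν s).compl).2
      (compl_mem_ae_iff.2 (by rwa [measure_toMeasurable]))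
  have hLt' := ae_iff.1 hLt
  simp only [mem_compl_iff, not_not] at hLt'
  exact measure_mono_null (preimage_mono (subset_toMeasurable ν s)) hLt'

variable [FiniteDimensional ℝ F]

theorem exists_mem_nhds_addHaar_preimage_inter_eq_zero {q : V → F} {x₀ : V}
    (hq : ContDiffAt ℝ 1 q x₀) (hsurj : Surjective (fderiv ℝ q x₀)) {s : Set F} (hs : ν s = 0) :
    ∃ W ∈ 𝓝 x₀, μ (q ⁻¹' s ∩ W) = 0 := by
  set L := fderiv ℝ q x₀
  obtain ⟨j, hj⟩ := L.exists_rightInverse_of_surjective (LinearMap.range_eq_top.2 hsurj)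
  set Φ : V → V := fun x => x + j (q x - L x)
  have hLΦ : ∀ x, L (Φ x) = q x := fun x => by
    simp [Φ, ← ContinuousLinearMap.comp_apply L j, hj]
  have hΦ : ContDiffAt ℝ 1 Φ x₀ :=
    contDiffAt_id.add (j.contDiff.contDiffAt.comp x₀ (hq.sub L.contDiff.contDiffAt))
  have hΦ' : HasFDerivAt Φ ((ContinuousLinearEquiv.refl ℝ V : V ≃L[ℝ] V) : V →L[ℝ] V) x₀ := by
    convert (hasFDerivAt_id x₀).add (j.hasFDerivAt.comp x₀
      ((hq.differentiableAt one_ne_zero).hasFDerivAt.sub L.hasFDerivAt)) using 1 <;>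
      ext <;> simp [Φ, L]
  set ψ := hΦ.localInverse hΦ' one_ne_zero
  have hψ_diff : ∀ᶠ x in 𝓝 x₀, DifferentiableAt ℝ ψ (Φ x) :=
    hΦ.continuousAt.eventually <| ((hΦ.to_localInverse hΦ' one_ne_zero).eventually
      (by simp)).mono fun y hy => hy.differentiableAt one_ne_zero
  have hψ_inv : ∀ᶠ x in 𝓝 x₀, ψ (Φ x) = x :=
    (hΦ.hasStrictFDerivAt' hΦ' one_ne_zero).eventually_left_inverse
  refine ⟨_, hψ_diff.and hψ_inv, measure_mono_null ?_ <|
    addHaar_image_eq_zero_of_differentiableOn_of_addHaar_eq_zero μ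
      (s := L ⁻¹' s ∩ {y | DifferentiableAt ℝ ψ y}) (fun y hy => hy.2.differentiableWithinAt)
      (measure_mono_null inter_subset_left
        ((L : V →ₗ[ℝ] F).addHaar_preimage_eq_zero_of_surjective μ ν hsurj hs))⟩
  rintro x ⟨hxs, hx_diff, hx_inv⟩
  exact ⟨Φ x, ⟨by simpa [hLΦ] using hxs, hx_diff⟩, hx_inv⟩

theorem addHaar_preimage_inter_eq_zero_of_surjective_fderiv {q : V → F} {A : Set V}
    (hA : ∀ x ∈ A, ContDiffAt ℝ 1 q x ∧ Surjective (fderiv ℝ q x)) {s : Set F} (hs : ν s = 0) :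
    μ (q ⁻¹' s ∩ A) = 0 := by
  refine measure_null_of_locally_null _ fun x hx => ?_
  obtain ⟨W, hW, hW0⟩ :=
    exists_mem_nhds_addHaar_preimage_inter_eq_zero μ ν (hA x hx.2).1 (hA x hx.2).2 hs
  exact ⟨_, inter_mem_nhdsWithin _ hW, measure_mono_null (by gcongr; exact inter_subset_left) hW0⟩

end Submersion

theorem MeasureTheory.withDensity_absolutelyContinuous_restrict_support {α : Type*}
    [MeasurableSpace α] (μ : Measure α) {g : α → ℝ≥0∞} (hg : Measurable g) :
    μ.withDensity g ≪ μ.restrict (support g) := by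
  conv_lhs => rw [← indicator_support (f := g)]
  rw [withDensity_indicator (measurableSet_support hg)]
  exact withDensity_absolutelyContinuous _ _

theorem pushforward_absolutelyContinuous_general (n k : ℕ)
    (U : Set (EuclideanSpace ℝ (Fin n))) (hU : IsOpen U)
    (φ : EuclideanSpace ℝ (Fin n) → EuclideanSpace ℝ (Fin (n + k)))
    (hφ : ContDiffOn ℝ 1 φ U)
    (E : Submodule ℝ (EuclideanSpace ℝ (Fin (n + k))))
    (f : EuclideanSpace ℝ (Fin n) → ℝ) (hf : Measurable f)
    (hcrit : ∀ x ∈ U,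
      ¬ Function.Surjective (fun v : EuclideanSpace ℝ (Fin n) =>
        Submodule.orthogonalProjectionOnto E (fderiv ℝ φ x v)) → f x = 0) :
    ((volM φ U).withDensity fun x => ENNReal.ofReal (f x)).map
        (fun x => Submodule.orthogonalProjectionOnto E (φ x)) ≪ (volume : Measure ↥E) := by
  set P := Submodule.orthogonalProjectionOnto E
  set g : EuclideanSpace ℝ (Fin n) → ℝ≥0∞ := fun x => ENNReal.ofReal (f x)
  have hg : Measurable g := ENNReal.measurable_ofReal.comp hf
  set T := support g ∩ U
  have hT : MeasurableSet T := (measurableSet_support hg).inter hU.measurableSet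
  have hac : (volM φ U).withDensity g ≪ volume.restrict T := by
    refine (withDensity_absolutelyContinuous_restrict_support _ hg).trans ?_
    rw [← Measure.restrict_restrict (measurableSet_support hg)]
    exact (withDensity_absolutelyContinuous _ _).restrict _
  have hsubmersion : ∀ x ∈ T,
      ContDiffAt ℝ 1 (fun x => P (φ x)) x ∧ Surjective (fderiv ℝ (fun x => P (φ x)) x) := by
    rintro x ⟨hfx, hxU⟩
    have hφx : ContDiffAt ℝ 1 φ x := hφ.contDiffAt (hU.mem_nhds hxU)
    refine ⟨P.contDiff.contDiffAt.comp x hφx, ?_⟩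
    have hPφ : HasFDerivAt (fun x => P (φ x)) (P.comp (fderiv ℝ φ x)) x :=
      P.hasFDerivAt.comp x (hφx.differentiableAt one_ne_zero).hasFDerivAt
    rw [hPφ.fderiv]
    by_contra hns
    exact hfx (by simp [g, hcrit x hxU hns])
  have hmeas : AEMeasurable (fun x => P (φ x)) ((volM φ U).withDensity g) :=
    ((P.continuous.comp_continuousOn hφ.continuousOn).mono inter_subset_right
      |>.aemeasurable hT).mono_ac hac
  refine Measure.AbsolutelyContinuous.mk fun s hs hs0 => ?_
  rw [Measure.map_apply_of_aemeasurable hmeas hs]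
  exact hac (by
    rw [Measure.restrict_apply' hT]
    exact addHaar_preimage_inter_eq_zero_of_surjective_fderiv volume volume hsubmersion hs0)

/-- If `f ≥ 0` is Borel, locally integrable for the Riemannian measure of a `C¹` immersion
`φ : U → ℝ^{n+k}`, and vanishes on the critical set of the orthogonal projection `p = P∘φ`
onto a subspace `E` of dimension `m ≤ n`, then `p_# (f · dv_M)` is absolutely continuous with
respect to the Lebesgue measure of `E`. -/
theorem pushforward_absolutelyContinuous (n k m : ℕ) (hm : m ≤ n)
    (U : Set (EuclideanSpace ℝ (Fin n))) (hU : IsOpen U)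
    (φ : EuclideanSpace ℝ (Fin n) → EuclideanSpace ℝ (Fin (n + k)))
    (hφ : ContDiffOn ℝ 1 φ U)
    (himm : ∀ x ∈ U, Function.Injective (fderiv ℝ φ x))
    (E : Submodule ℝ (EuclideanSpace ℝ (Fin (n + k)))) (hE : Module.finrank ℝ E = m)
    (f : EuclideanSpace ℝ (Fin n) → ℝ) (hf : Measurable f) (hf0 : ∀ x, 0 ≤ f x)
    (hloc : LocallyIntegrableOn f U (volM φ U))
    (hcrit : ∀ x ∈ U,
      ¬ Function.Surjective (fun v : EuclideanSpace ℝ (Fin n) =>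
        Submodule.orthogonalProjectionOnto E (fderiv ℝ φ x v)) → f x = 0) :
    ((volM φ U).withDensity fun x => ENNReal.ofReal (f x)).map
        (fun x => Submodule.orthogonalProjectionOnto E (φ x)) ≪ (volume : Measure ↥E) :=
  pushforward_absolutelyContinuous_general n k U hU φ hφ E f hf hcrit
end

section
/- The sequence α_{n,1} = ( ∫₀^π |cos r|^{1/n} (sin r)^{n−1} dr ) / ( ∫₀^π (sin r)^{n−1} dr ) satisfies lim_{n→∞} α_{n,1} = 1. -/
/-!
On `[0, π]` the weight `sin ^ (n - 1)` has total mass at least `2 / n`, whereas `|cos r|` is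
at least `sin δ` outside the window `|r - π / 2| < δ` of length `2δ`, on which the weight is
at most `1`. Taking `δ = π / (2 n²)` the window carries at most a fraction `π / (2n)` of the mass,
and outside it `|cos r| ^ (1 / n) ≥ (1 / n²) ^ (1 / n) → 1`. Together with `|cos r| ^ (1 / n) ≤ 1`
this squeezes `α_{n,1}` to `1`.
-/

open Real Set Filter Topology MeasureTheory intervalIntegral

theorem two_div_le_integral_sin_pow (m : ℕ) : 2 / (m + 1) ≤ ∫ x in 0..π, sin x ^ m := by
  induction m using Nat.twoStepInduction with
  | zero => norm_num; linarith [pi_gt_three]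
  | one => norm_num
  | more k ih _ =>
    rw [integral_sin_pow, sin_zero, sin_pi, zero_pow k.succ_ne_zero]
    simp only [zero_mul, sub_self, zero_div, zero_add]
    push_cast
    calc 2 / ((k : ℝ) + 2 + 1) ≤ 2 / (k + 2) :=
          div_le_div_of_nonneg_left zero_le_two (by positivity) (by linarith)
      _ = (k + 1) / (k + 2) * (2 / (k + 1)) := by field_simp
      _ ≤ _ := mul_le_mul_of_nonneg_left ih (by positivity)

theorem sin_le_abs_cos_of_le_abs_sub {δ r : ℝ} (hδ : 0 ≤ δ) (hr : r ∈ Icc 0 π)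
    (h : δ ≤ |π / 2 - r|) : sin δ ≤ |cos r| := by
  have hle : |π / 2 - r| ≤ π / 2 := abs_le.2 ⟨by linarith [hr.2], by linarith [hr.1]⟩
  rw [← sin_pi_div_two_sub, abs_sin_eq_sin_abs_of_abs_le_pi (by linarith [pi_pos])]
  exact sin_le_sin_of_le_of_le_pi_div_two (by linarith) hle h

theorem mul_sub_le_integral_of_le_off_window {f g : ℝ → ℝ} {a u v b c : ℝ}
    (hau : a ≤ u) (huv : u ≤ v) (hvb : v ≤ b)
    (hf : IntervalIntegrable f volume a b) (hg : IntervalIntegrable g volume a b) (hc : 0 ≤ c)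
    (hcg : ∀ x ∈ Icc a u ∪ Icc v b, c * g x ≤ f x)
    (hf0 : ∀ x ∈ Icc u v, 0 ≤ f x) (hg1 : ∀ x ∈ Icc u v, g x ≤ 1) :
    c * ((∫ x in a..b, g x) - (v - u)) ≤ ∫ x in a..b, f x := by
  have hab : uIcc a b = Icc a b := uIcc_of_le (hau.trans (huv.trans hvb))
  have sub {φ : ℝ → ℝ} (hφ : IntervalIntegrable φ volume a b) {s t : ℝ} (hs : s ∈ Icc a b)
      (ht : t ∈ Icc a b) : IntervalIntegrable φ volume s t :=
    hφ.mono_set (uIcc_subset_uIcc (hab ▸ hs) (hab ▸ ht))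
  have ha : a ∈ Icc a b := ⟨le_rfl, by linarith⟩
  have hu : u ∈ Icc a b := ⟨hau, by linarith⟩
  have hv : v ∈ Icc a b := ⟨by linarith, hvb⟩
  have hb : b ∈ Icc a b := ⟨by linarith, le_rfl⟩
  have left : c * ∫ x in a..u, g x ≤ ∫ x in a..u, f x := by
    rw [← intervalIntegral.integral_const_mul]
    exact integral_mono_on hau ((sub hg ha hu).const_mul c) (sub hf ha hu)
      fun x hx => hcg x (Or.inl hx)
  have right : c * ∫ x in v..b, g x ≤ ∫ x in v..b, f x := by
    rw [← intervalIntegral.integral_const_mul]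
    exact integral_mono_on hvb ((sub hg hv hb).const_mul c) (sub hf hv hb)
      fun x hx => hcg x (Or.inr hx)
  have middle_f : 0 ≤ ∫ x in u..v, f x := integral_nonneg huv hf0
  have middle_g : c * ∫ x in u..v, g x ≤ c * (v - u) := by
    refine mul_le_mul_of_nonneg_left ?_ hc
    simpa using integral_mono_on huv (sub hg hu hv) intervalIntegrable_const hg1
  rw [← integral_add_adjacent_intervals (sub hg ha hu) (sub hg hu hb),
    ← integral_add_adjacent_intervals (sub hg hu hv) (sub hg hv hb),
    ← integral_add_adjacent_intervals (sub hf ha hu) (sub hf hu hb),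
    ← integral_add_adjacent_intervals (sub hf hu hv) (sub hf hv hb)]
  linarith

theorem continuous_abs_cos_rpow_mul_sin_pow {p : ℝ} (hp : 0 ≤ p) (m : ℕ) :
    Continuous fun x => |cos x| ^ p * sin x ^ m :=
  ((continuous_abs.comp continuous_cos).rpow_const fun _ => Or.inr hp).mul
    (continuous_sin.pow m)

theorem integral_abs_cos_rpow_mul_sin_pow_le {p : ℝ} (hp : 0 ≤ p) (m : ℕ) :
    ∫ x in 0..π, |cos x| ^ p * sin x ^ m ≤ ∫ x in 0..π, sin x ^ m := by
  refine integral_mono_on pi_pos.le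
    ((continuous_abs_cos_rpow_mul_sin_pow hp m).intervalIntegrable 0 π)
    ((continuous_sin.pow m).intervalIntegrable 0 π) fun x hx => ?_
  exact mul_le_of_le_one_left (pow_nonneg (sin_nonneg_of_mem_Icc hx) m)
    (rpow_le_one (abs_nonneg _) (abs_cos_le_one x) hp)

theorem sin_rpow_mul_sub_le_integral_abs_cos_rpow_mul_sin_pow {p δ : ℝ} (hp : 0 ≤ p)
    (hδ : 0 ≤ δ) (hδπ : δ ≤ π / 2) (m : ℕ) :
    sin δ ^ p * ((∫ x in 0..π, sin x ^ m) - 2 * δ) ≤ ∫ x in 0..π, |cos x| ^ p * sin x ^ m := by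
  have hsinδ : 0 ≤ sin δ := sin_nonneg_of_nonneg_of_le_pi hδ (by linarith [pi_pos])
  have hsin : ∀ x ∈ Icc 0 π, 0 ≤ sin x := fun x hx => sin_nonneg_of_mem_Icc hx
  have hwin : Icc (π / 2 - δ) (π / 2 + δ) ⊆ Icc 0 π := Icc_subset_Icc (by linarith) (by linarith)
  have hoff : Icc 0 (π / 2 - δ) ∪ Icc (π / 2 + δ) π ⊆ Icc 0 π :=
    union_subset (Icc_subset_Icc_right (by linarith)) (Icc_subset_Icc_left (by linarith))
  have key := mul_sub_le_integral_of_le_off_window (f := fun x => |cos x| ^ p * sin x ^ m)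
    (g := fun x => sin x ^ m) (u := π / 2 - δ) (v := π / 2 + δ)
    (by linarith) (by linarith) (by linarith)
    ((continuous_abs_cos_rpow_mul_sin_pow hp m).intervalIntegrable 0 π)
    ((continuous_sin.pow m).intervalIntegrable 0 π) (rpow_nonneg hsinδ p) ?_ ?_ ?_
  · convert key using 3; ring
  · intro x hx
    have hδx : δ ≤ |π / 2 - x| := by
      rcases hx with hx | hx
      · exact le_abs.2 (Or.inl (by linarith [hx.2]))
      · exact le_abs.2 (Or.inr (by linarith [hx.1]))
    exact mul_le_mul_of_nonneg_right
      (rpow_le_rpow hsinδ (sin_le_abs_cos_of_le_abs_sub hδ (hoff hx) hδx) hp)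
      (pow_nonneg (hsin x (hoff hx)) m)
  · intro x hx
    have := hsin x (hwin hx)
    positivity
  · exact fun x hx => pow_le_one₀ (hsin x (hwin hx)) (sin_le_one x)

theorem tendsto_inv_sq_rpow_mul_one_sub :
    Tendsto (fun n : ℕ => ((n : ℝ) ^ 2)⁻¹ ^ ((1 : ℝ) / n) * (1 - π / (2 * n))) atTop (𝓝 1) := by
  have hroot : Tendsto (fun n : ℕ => (((n : ℝ) ^ ((1 : ℝ) / n)) ^ 2)⁻¹) atTop (𝓝 1) := by
    simpa using ((tendsto_rpow_div.comp tendsto_natCast_atTop_atTop).pow 2).inv₀ (by norm_num)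
  have hcorr : Tendsto (fun n : ℕ => 1 - π / (2 * n)) atTop (𝓝 1) := by
    simpa using ((tendsto_const_nhds (x := π)).div_atTop
      (tendsto_natCast_atTop_atTop.const_mul_atTop two_pos)).const_sub 1
  have h := hroot.mul hcorr
  rw [mul_one] at h
  refine h.congr fun n => congrArg (· * _) ?_
  rw [inv_rpow (by positivity), ← rpow_natCast, ← rpow_natCast, ← rpow_mul (by positivity),
    ← rpow_mul (by positivity), mul_comm]

theorem inv_sq_rpow_mul_one_sub_le_div_integral {p : ℝ} (hp : 0 ≤ p) {n : ℕ} (hn : 2 ≤ n) :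
    ((n : ℝ) ^ 2)⁻¹ ^ p * (1 - π / (2 * n)) ≤
      (∫ x in 0..π, |cos x| ^ p * sin x ^ (n - 1)) / ∫ x in 0..π, sin x ^ (n - 1) := by
  set I := ∫ x in 0..π, sin x ^ (n - 1)
  have hI0 : 0 < I := integral_sin_pow_pos _
  have hn' : (2 : ℝ) ≤ n := by exact_mod_cast hn
  have hI : 2 / n ≤ I := by
    simpa [Nat.cast_sub (one_le_two.trans hn)] using two_div_le_integral_sin_pow (n - 1)
  set δ := π / (2 * n ^ 2) with hδdef
  have hδ : 0 ≤ δ := by positivity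
  have hδπ : δ ≤ π / 2 := div_le_div_of_nonneg_left pi_pos.le two_pos (by nlinarith)
  have hsinδ : ((n : ℝ) ^ 2)⁻¹ ≤ sin δ := by
    calc ((n : ℝ) ^ 2)⁻¹ = 2 / π * δ := by rw [hδdef]; field_simp
      _ ≤ sin δ := mul_le_sin hδ hδπ
  have hwindow : 2 * δ ≤ π / (2 * n) * I := by
    calc 2 * δ = π / (2 * n) * (2 / n) := by rw [hδdef]; field_simp
      _ ≤ π / (2 * n) * I := mul_le_mul_of_nonneg_left hI (by positivity)
  have hIδ : 0 ≤ I - 2 * δ := by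
    have : π / (2 * n) ≤ 1 := by rw [div_le_one (by positivity)]; nlinarith [pi_lt_four]
    linarith [mul_le_mul_of_nonneg_right this hI0.le]
  rw [le_div_iff₀ hI0]
  calc ((n : ℝ) ^ 2)⁻¹ ^ p * (1 - π / (2 * n)) * I
      ≤ ((n : ℝ) ^ 2)⁻¹ ^ p * (I - 2 * δ) := by
        rw [mul_assoc]; exact mul_le_mul_of_nonneg_left (by linarith) (by positivity)
    _ ≤ sin δ ^ p * (I - 2 * δ) :=
        mul_le_mul_of_nonneg_right (rpow_le_rpow (by positivity) hsinδ hp) hIδ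
    _ ≤ _ := sin_rpow_mul_sub_le_integral_abs_cos_rpow_mul_sin_pow hp hδ hδπ (n - 1)

/-- The constants `α_{n,1} = (∫₀^π |cos r|^{1/n} sin^{n-1} r dr) / (∫₀^π sin^{n-1} r dr)`
appearing in the isoperimetric inequality for hypersurfaces tend to `1` as `n → ∞`. -/
theorem tendsto_alpha_n_one :
    Filter.Tendsto
      (fun n : ℕ =>
        (∫ r in (0 : ℝ)..Real.pi, |Real.cos r| ^ ((1 : ℝ) / n) * Real.sin r ^ (n - 1)) /
          (∫ r in (0 : ℝ)..Real.pi, Real.sin r ^ (n - 1)))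
      Filter.atTop (nhds 1) := by
  refine tendsto_of_tendsto_of_tendsto_of_le_of_le' tendsto_inv_sq_rpow_mul_one_sub
    tendsto_const_nhds ?_ (Eventually.of_forall fun n => ?_)
  · filter_upwards [eventually_ge_atTop 2] with n hn
    exact inv_sq_rpow_mul_one_sub_le_div_integral (by positivity) hn
  · exact div_le_one_of_le₀ (integral_abs_cos_rpow_mul_sin_pow_le (by positivity) _)
      (integral_sin_pow_pos _).le
end
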